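/- Let C be a skeletal finite EI category satisfying the UFP (a finite free EI category). Let R₁, R₂ be representations of C (functors from C to finite-dimensional k-vector spaces), and let {φ_x : R₁(x) → R₂(x)} be a family of linear maps indexed by objects such that (a) each φ_x is a k Aut_C(x)-module homomorphism, and (b) for each representative unfactorizable morphism α : x → y, φ_y ∘ R₁(α) = R₂(α) ∘ φ_x. Then φ_y ∘ R₁(β) = R₂(β) ∘ φ_x for every morphism β : x → y in C, i.e., {φ_x} is a natural transformation R₁ → R₂. -/
import Mathlib


open CategoryTheory

/-- A morphism is unfactorizable if it is not an isomorphism and in any factorization into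
two morphisms one factor is an isomorphism. -/
def Unfactorizable {C : Type*} [Category C] {x z : C} (α : x ⟶ z) : Prop :=
  ¬ IsIso α ∧ ∀ (y : C) (β : x ⟶ y) (γ : y ⟶ z), α = β ≫ γ → IsIso β ∨ IsIso γ

/-- A path in a category all of whose edges are unfactorizable morphisms. -/
inductive PathUnfact {C : Type*} [Category C] : ∀ {x y : C}, Quiver.Path x y → Prop
  | nil {x : C} : PathUnfact (Quiver.Path.nil : Quiver.Path x x)
  | cons {x y z : C} {p : Quiver.Path x y} {e : y ⟶ z} :
      PathUnfact p → Unfactorizable e → PathUnfact (p.cons e)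

/-- `TwistedBy p q g'` says that the paths `p = (α₁, …, αₙ)` and `q = (β₁, …, βₙ)` pass
through the same objects and there are automorphisms `hᵢ` of the intermediate objects with
`β₁ = h₁ ∘ α₁`, `βᵢ = hᵢ ∘ αᵢ ∘ hᵢ₋₁⁻¹`, and `βₙ = g' ∘ αₙ ∘ hₙ₋₁⁻¹`, where `g'` is the
final twist at the common target. -/
inductive TwistedBy {C : Type*} [Category C] :
    ∀ {x y : C}, Quiver.Path x y → Quiver.Path x y → (y ≅ y) → Prop
  | nil {x : C} :
      TwistedBy (Quiver.Path.nil : Quiver.Path x x) Quiver.Path.nil (Iso.refl x)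
  | cons {x w y : C} {p q : Quiver.Path x w} (g : w ≅ w) (g' : y ≅ y) (e : w ⟶ y) :
      TwistedBy p q g → TwistedBy (p.cons e) (q.cons (g.inv ≫ e ≫ g'.hom)) g'

/-- The Unique Factorization Property: any two decompositions of a non-isomorphism into
unfactorizable morphisms have the same length, pass through the same intermediate objects,
and differ only by automorphisms of the intermediate objects. -/
def SatisfiesUFP (C : Type*) [Category C] : Prop :=
  ∀ {x y : C} (p q : Quiver.Path x y), PathUnfact p → PathUnfact q →
    ¬ IsIso (composePath p) → composePath p = composePath q → TwistedBy p q (Iso.refl y)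

section Aux

open CategoryTheory Quiver

variable {C : Type*} [Category C]

lemma isIso_of_two_comps {x y : C} (f : x ⟶ y) (h : y ⟶ x)
    (h1 : IsIso (f ≫ h)) (h2 : IsIso (h ≫ f)) : IsIso f := by
  haveI := h1; haveI := h2
  refine ⟨h ≫ inv (f ≫ h), by rw [← Category.assoc, IsIso.hom_inv_id], ?_⟩
  calc (h ≫ inv (f ≫ h)) ≫ f
      = inv (h ≫ f) ≫ (h ≫ f) ≫ (h ≫ inv (f ≫ h)) ≫ f := by
        rw [IsIso.inv_hom_id_assoc]
    _ = inv (h ≫ f) ≫ h ≫ ((f ≫ h) ≫ inv (f ≫ h)) ≫ f := by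
        simp only [Category.assoc]
    _ = 𝟙 y := by simp

lemma no_backward (hEI : ∀ (x : C) (f : x ⟶ x), IsIso f)
    {x y : C} (f : x ⟶ y) (hf : ¬ IsIso f) (g : y ⟶ x) : False :=
  hf (isIso_of_two_comps f g (hEI _ _) (hEI _ _))

lemma PathUnfact.comp' {x y z : C} {p : Path x y} {q : Path y z}
    (hp : PathUnfact p) (hq : PathUnfact q) : PathUnfact (p.comp q) := by
  induction hq with
  | nil => exact hp
  | cons hq' he ih => exact .cons ih he

lemma factor_unfact [Finite (Σ x y : C, x ⟶ y)]
    (hEI : ∀ (x : C) (f : x ⟶ x), IsIso f) :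
    ∀ {x y : C} (β : x ⟶ y), ¬ IsIso β →
      ∃ p : Path x y, PathUnfact p ∧ composePath p = β := by
  have hC : Finite C := Finite.of_injective
    (fun x => (⟨x, x, 𝟙 x⟩ : Σ x y : C, x ⟶ y)) (fun a b h => congrArg Sigma.fst h)
  suffices H : ∀ n : ℕ, ∀ {x y : C} (β : x ⟶ y),
      ({z : C | Nonempty (x ⟶ z) ∧ Nonempty (z ⟶ y)}).ncard ≤ n → ¬ IsIso β →
      ∃ p : Path x y, PathUnfact p ∧ composePath p = β by
    intro x y β hβ
    exact H _ β le_rfl hβ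
  intro n
  induction n with
  | zero =>
    intro x y β hcard hβ
    exfalso
    have hy : y ∈ {z : C | Nonempty (x ⟶ z) ∧ Nonempty (z ⟶ y)} := ⟨⟨β⟩, ⟨𝟙 y⟩⟩
    have h0 : ({z : C | Nonempty (x ⟶ z) ∧ Nonempty (z ⟶ y)}).ncard = 0 :=
      Nat.le_zero.mp hcard
    rw [Set.ncard_eq_zero (Set.toFinite _)] at h0
    exact absurd hy (h0 ▸ Set.notMem_empty y)
  | succ n ih =>
    intro x y β hcard hβ
    by_cases hu : Unfactorizable β
    · exact ⟨(Path.nil).cons β, .cons .nil hu, by simp⟩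
    · rw [Unfactorizable] at hu
      push_neg at hu
      obtain ⟨w, β₁, β₂, heq, h₁, h₂⟩ := hu hβ
      have hss₁ : {z : C | Nonempty (x ⟶ z) ∧ Nonempty (z ⟶ w)}
          ⊂ {z : C | Nonempty (x ⟶ z) ∧ Nonempty (z ⟶ y)} := by
        constructor
        · rintro z ⟨hz1, ⟨f⟩⟩
          exact ⟨hz1, ⟨f ≫ β₂⟩⟩
        · intro hsub
          obtain ⟨-, ⟨g⟩⟩ := hsub (⟨⟨β⟩, ⟨𝟙 y⟩⟩ :
            y ∈ {z : C | Nonempty (x ⟶ z) ∧ Nonempty (z ⟶ y)})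
          exact no_backward hEI β₂ h₂ g
      have hss₂ : {z : C | Nonempty (w ⟶ z) ∧ Nonempty (z ⟶ y)}
          ⊂ {z : C | Nonempty (x ⟶ z) ∧ Nonempty (z ⟶ y)} := by
        constructor
        · rintro z ⟨⟨f⟩, hz2⟩
          exact ⟨⟨β₁ ≫ f⟩, hz2⟩
        · intro hsub
          obtain ⟨⟨g⟩, -⟩ := hsub (⟨⟨𝟙 x⟩, ⟨β⟩⟩ :
            x ∈ {z : C | Nonempty (x ⟶ z) ∧ Nonempty (z ⟶ y)})
          exact no_backward hEI β₁ h₁ g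
      have c₁ := Nat.lt_succ_iff.mp
        (lt_of_lt_of_le (Set.ncard_lt_ncard hss₁ (Set.toFinite _)) hcard)
      have c₂ := Nat.lt_succ_iff.mp
        (lt_of_lt_of_le (Set.ncard_lt_ncard hss₂ (Set.toFinite _)) hcard)
      obtain ⟨p₁, hp₁, he₁⟩ := ih β₁ c₁ h₁
      obtain ⟨p₂, hp₂, he₂⟩ := ih β₂ c₂ h₂
      exact ⟨p₁.comp p₂, hp₁.comp' hp₂, by rw [heq, composePath_comp, he₁, he₂]⟩

end Aux

/-- For representations `R₁, R₂` of a finite free EI category (a skeletal finite EI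
category satisfying the UFP), a family of linear maps `φ_x : R₁(x) → R₂(x)` which commutes
with all automorphisms and with a chosen set of representative unfactorizable morphisms is
automatically natural at every morphism, i.e. is a homomorphism of representations. -/
theorem stmt17 {k : Type*} [Field k] {C : Type*} [Category C] [Finite (Σ x y : C, x ⟶ y)]
    (hEI : ∀ (x : C) (f : x ⟶ x), IsIso f)
    (hskel : ∀ x y : C, (x ≅ y) → x = y)
    (hUFP : SatisfiesUFP C)
    (R₁ R₂ : C ⥤ FGModuleCat k)
    (Rp : Set (Σ x y : C, x ⟶ y))
    (hRp₁ : ∀ i ∈ Rp, Unfactorizable i.2.2)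
    (hRp₂ : ∀ {x y : C} (β : x ⟶ y), Unfactorizable β →
      ∃ α : x ⟶ y, (⟨x, y, α⟩ : Σ x y : C, x ⟶ y) ∈ Rp ∧
        ∃ (g : x ≅ x) (h : y ≅ y), β = g.hom ≫ α ≫ h.hom)
    (φ : ∀ x : C, R₁.obj x ⟶ R₂.obj x)
    (haut : ∀ (x : C) (g : x ≅ x), R₁.map g.hom ≫ φ x = φ x ≫ R₂.map g.hom)
    (hrep : ∀ {x y : C} (α : x ⟶ y), (⟨x, y, α⟩ : Σ x y : C, x ⟶ y) ∈ Rp →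
      R₁.map α ≫ φ y = φ x ≫ R₂.map α) :
    ∀ {x y : C} (β : x ⟶ y), R₁.map β ≫ φ y = φ x ≫ R₂.map β := by
  intro x y β
  have hunf : ∀ {x y : C} (β : x ⟶ y), Unfactorizable β →
      R₁.map β ≫ φ y = φ x ≫ R₂.map β := by
    intro x y β hb
    obtain ⟨α, hmem, g, h, rfl⟩ := hRp₂ β hb
    have h1 := hrep α hmem
    have h2 := haut x g
    have h3 := haut y h
    simp only [Functor.map_comp, Category.assoc]
    rw [h3, reassoc_of% h1, reassoc_of% h2]
  have hpath : ∀ {x y : C} (p : Quiver.Path x y), PathUnfact p →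
      R₁.map (composePath p) ≫ φ y = φ x ≫ R₂.map (composePath p) := by
    intro x y p hp
    induction hp with
    | nil => simp
    | @cons a b c q e he ih =>
      simp only [composePath_cons, Functor.map_comp, Category.assoc]
      rw [hunf q he, reassoc_of% ih]
  by_cases hβ : IsIso β
  · have hxy : x = y := hskel x y (asIso β)
    subst hxy
    simpa using haut x (asIso β)
  · obtain ⟨p, hp, he⟩ := factor_unfact hEI β hβ
    rw [← he]
    exact hpath p hp
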